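/- arXiv:2309.09174 — 4 statements merged into one kernel-verified Lean document; each statement's English description precedes it below -/
import Mathlib

section
/- (Young's inequality for a power-law times a logarithm) For all real s, t ≥ 0 and r > 1, one has s·t^(r−1)·[log(e + t) + t/(r·(e + t))] ≤ (s^r / r)·log(e + s) + t^r·[((r−1)/r)·log(e + t) + t/(r·(e + t))]. -/
open Real

lemma young_aux_e_ge_two : (2:ℝ) ≤ Real.exp 1 := by
  nlinarith [Real.add_one_le_exp 1]

lemma young_aux_log_nonneg {x : ℝ} (hx : 0 ≤ x) : 0 ≤ Real.log (Real.exp 1 + x) := by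
  apply Real.log_nonneg
  nlinarith [young_aux_e_ge_two]

lemma young_aux_g_nonneg {x r : ℝ} (hx : 0 ≤ x) (hr : 1 < r) :
    0 ≤ x ^ (r - 1) * (Real.log (Real.exp 1 + x) + x / (r * (Real.exp 1 + x))) := by
  have he : (0:ℝ) < Real.exp 1 + x := by nlinarith [young_aux_e_ge_two]
  have h1 : (0:ℝ) ≤ x ^ (r - 1) := Real.rpow_nonneg hx _
  have h2 : (0:ℝ) ≤ x / (r * (Real.exp 1 + x)) := by positivity
  nlinarith [young_aux_log_nonneg hx]

lemma young_aux_g_mono {a b r : ℝ} (ha : 0 ≤ a) (hab : a ≤ b) (hr : 1 < r) :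
    a ^ (r - 1) * (Real.log (Real.exp 1 + a) + a / (r * (Real.exp 1 + a))) ≤
    b ^ (r - 1) * (Real.log (Real.exp 1 + b) + b / (r * (Real.exp 1 + b))) := by
  have hb : 0 ≤ b := ha.trans hab
  have hea : (0:ℝ) < Real.exp 1 + a := by nlinarith [young_aux_e_ge_two]
  have heb : (0:ℝ) < Real.exp 1 + b := by nlinarith [young_aux_e_ge_two]
  have hr0 : (0:ℝ) < r := by linarith
  have h1 : a ^ (r - 1) ≤ b ^ (r - 1) := Real.rpow_le_rpow ha hab (by linarith)
  have h2 : Real.log (Real.exp 1 + a) ≤ Real.log (Real.exp 1 + b) :=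
    Real.log_le_log hea (by linarith)
  have h3 : a / (r * (Real.exp 1 + a)) ≤ b / (r * (Real.exp 1 + b)) := by
    rw [div_le_div_iff₀ (by positivity) (by positivity)]
    nlinarith [mul_le_mul_of_nonneg_left hab (mul_pos hr0 (Real.exp_pos 1)).le, Real.exp_pos 1]
  have hna : 0 ≤ Real.log (Real.exp 1 + a) + a / (r * (Real.exp 1 + a)) := by
    have := young_aux_log_nonneg ha
    positivity
  exact mul_le_mul h1 (add_le_add h2 h3) hna (Real.rpow_nonneg hb _)

lemma young_aux_deriv {x r : ℝ} (hx : 0 < x) (hr : 1 < r) :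
    HasDerivAt (fun y : ℝ => y ^ r / r * Real.log (Real.exp 1 + y))
      (x ^ (r - 1) * (Real.log (Real.exp 1 + x) + x / (r * (Real.exp 1 + x)))) x := by
  have he : (0:ℝ) < Real.exp 1 + x := by nlinarith [young_aux_e_ge_two]
  have hr0 : (0:ℝ) < r := by linarith
  have h1 : HasDerivAt (fun y : ℝ => y ^ r) (r * x ^ (r - 1)) x :=
    Real.hasDerivAt_rpow_const (Or.inl hx.ne')
  have hadd : HasDerivAt (fun y : ℝ => Real.exp 1 + y) 1 x := by
    simpa using (hasDerivAt_id x).const_add (Real.exp 1)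
  have h2 : HasDerivAt (fun y : ℝ => Real.log (Real.exp 1 + y)) ((Real.exp 1 + x)⁻¹ * 1) x :=
    (Real.hasDerivAt_log he.ne').comp x hadd
  have h3 := (h1.div_const r).mul h2
  convert h3 using 1
  case e'_4 => rfl
  case e'_5 => rfl
  case e'_8 => rfl
  have hxr : x ^ r = x ^ (r - 1) * x := by
    rw [← Real.rpow_add_one hx.ne' (r - 1)]; ring_nf
  rw [hxr]
  field_simp

theorem young_power_log (s t r : ℝ) (hs : 0 ≤ s) (ht : 0 ≤ t) (hr : 1 < r) :
    s * t ^ (r - 1) * (Real.log (Real.exp 1 + t) + t / (r * (Real.exp 1 + t))) ≤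
      s ^ r / r * Real.log (Real.exp 1 + s) +
        t ^ r * ((r - 1) / r * Real.log (Real.exp 1 + t) + t / (r * (Real.exp 1 + t))) := by
  have hr0 : (0:ℝ) < r := by linarith
  set F : ℝ → ℝ := fun y => y ^ r / r * Real.log (Real.exp 1 + y) with hF
  set g : ℝ → ℝ := fun y => y ^ (r - 1) * (Real.log (Real.exp 1 + y) + y / (r * (Real.exp 1 + y))) with hg
  rcases eq_or_lt_of_le ht with heq | htpos
  · -- t = 0
    rw [← heq]
    rw [Real.zero_rpow (by linarith : r - 1 ≠ 0), Real.zero_rpow (by linarith : r ≠ 0)]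
    have := young_aux_log_nonneg hs
    have h1 : 0 ≤ s ^ r := Real.rpow_nonneg hs r
    simp only [mul_zero, zero_mul]
    positivity
  · -- t > 0
    have key : (s - t) * g t ≤ F s - F t := by
      rcases lt_trichotomy s t with hst | hst | hst
      · -- s < t : MVT on [s, t]
        have hcont : ContinuousOn F (Set.Icc s t) := by
          intro x hx
          rcases eq_or_lt_of_le hs with hs0 | hspos
          · -- s could be 0; handle continuity at each point including 0
            rcases eq_or_lt_of_le hx.1 with hxs | hxs
            · -- x = s = 0
              have hx0 : x = 0 := by rw [← hxs, ← hs0]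
              subst hx0
              apply ContinuousAt.continuousWithinAt
              apply ContinuousAt.mul
              · exact (Real.continuousAt_rpow_const 0 r (Or.inr hr0.le)).div_const r
              · exact (Real.continuousAt_log (by nlinarith [young_aux_e_ge_two])).comp
                  (continuousAt_const.add continuousAt_id)
            · exact ((young_aux_deriv (hs.trans_lt hxs) hr).continuousAt).continuousWithinAt
          · exact ((young_aux_deriv (lt_of_lt_of_le hspos hx.1) hr).continuousAt).continuousWithinAt
        obtain ⟨c, hc, hceq⟩ := exists_hasDerivAt_eq_slope F g hst hcont
          (fun x hx => young_aux_deriv (lt_of_le_of_lt hs hx.1) hr)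
        have hmono : g c ≤ g t := young_aux_g_mono (le_of_lt (lt_of_le_of_lt hs hc.1)) hc.2.le hr
        have hts : 0 < t - s := by linarith
        have : F t - F s = (t - s) * g c := by
          field_simp at hceq
          linarith [hceq]
        nlinarith [mul_le_mul_of_nonneg_left hmono hts.le]
      · simp [hst]
      · -- t < s : MVT on [t, s]
        have hcont : ContinuousOn F (Set.Icc t s) := fun x hx =>
          ((young_aux_deriv (lt_of_lt_of_le htpos hx.1) hr).continuousAt).continuousWithinAt
        obtain ⟨c, hc, hceq⟩ := exists_hasDerivAt_eq_slope F g hst hcont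
          (fun x hx => young_aux_deriv (lt_trans htpos hx.1) hr)
        have hmono : g t ≤ g c := young_aux_g_mono ht hc.1.le hr
        have hst' : 0 < s - t := by linarith
        have : F s - F t = (s - t) * g c := by
          field_simp at hceq
          linarith [hceq]
        nlinarith [mul_le_mul_of_nonneg_left hmono hst'.le]
    -- algebra: goal follows from key
    have htr : t ^ r = t ^ (r - 1) * t := by
      rw [← Real.rpow_add_one htpos.ne' (r - 1)]; ring_nf
    have het : (0:ℝ) < Real.exp 1 + t := by nlinarith [young_aux_e_ge_two]
    simp only [hF, hg] at key
    rw [htr]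
    have expand : t ^ (r - 1) * t * ((r - 1) / r * Real.log (Real.exp 1 + t) + t / (r * (Real.exp 1 + t)))
        = t * (t ^ (r - 1) * (Real.log (Real.exp 1 + t) + t / (r * (Real.exp 1 + t))))
          - (t ^ (r - 1) * t) / r * Real.log (Real.exp 1 + t) := by
      field_simp
      ring
    rw [expand, ← htr]
    nlinarith [key]
end

section
/- Let h: [0,∞) → [0,∞) be increasing and r ≥ 2. Then for all ξ, η ∈ ℝ^N, (h(|ξ|)·|ξ|^(r−2)·ξ − h(|η|)·|η|^(r−2)·η) · (ξ − η) ≥ C_r · |ξ − η|^r · h(min{|ξ|, |η|}), where C_r = min{2^(2−r), 1/2}. -/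
open Real RealInnerProductSpace

private lemma aux_rpow_subadd {a b p : ℝ} (ha : 0 ≤ a) (hb : 0 ≤ b) (hp : 0 ≤ p)
    (hp1 : p ≤ 1) : (a + b) ^ p ≤ a ^ p + b ^ p := by
  have := NNReal.rpow_add_le_add_rpow a.toNNReal b.toNNReal hp hp1
  have h2 := congrArg (fun x : NNReal => (x : ℝ)) (rfl : a.toNNReal + b.toNNReal = a.toNNReal + b.toNNReal)
  calc (a + b) ^ p = ((a.toNNReal + b.toNNReal : NNReal) : ℝ) ^ p := by
        rw [NNReal.coe_add, Real.coe_toNNReal _ ha, Real.coe_toNNReal _ hb]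
    _ = (((a.toNNReal + b.toNNReal) ^ p : NNReal) : ℝ) := by
        rw [NNReal.coe_rpow]
    _ ≤ ((a.toNNReal ^ p + b.toNNReal ^ p : NNReal) : ℝ) := by exact_mod_cast this
    _ = a ^ p + b ^ p := by
        rw [NNReal.coe_add, NNReal.coe_rpow, NNReal.coe_rpow,
          Real.coe_toNNReal _ ha, Real.coe_toNNReal _ hb]

private lemma aux_rpow_convex {a b p : ℝ} (ha : 0 ≤ a) (hb : 0 ≤ b) (hp1 : 1 ≤ p) :
    (a + b) ^ p ≤ 2 ^ (p - 1) * (a ^ p + b ^ p) := by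
  have := NNReal.rpow_add_le_mul_rpow_add_rpow a.toNNReal b.toNNReal hp1
  calc (a + b) ^ p = (((a.toNNReal + b.toNNReal) ^ p : NNReal) : ℝ) := by
        rw [NNReal.coe_rpow, NNReal.coe_add, Real.coe_toNNReal _ ha, Real.coe_toNNReal _ hb]
    _ ≤ (((2 : NNReal) ^ (p - 1) * (a.toNNReal ^ p + b.toNNReal ^ p) : NNReal) : ℝ) := by
        exact_mod_cast this
    _ = 2 ^ (p - 1) * (a ^ p + b ^ p) := by
        rw [NNReal.coe_mul, NNReal.coe_rpow, NNReal.coe_add, NNReal.coe_rpow, NNReal.coe_rpow,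
          Real.coe_toNNReal _ ha, Real.coe_toNNReal _ hb, NNReal.coe_two]

private lemma plain_key (N : ℕ) {r : ℝ} (hr : 2 ≤ r) (ξ η : EuclideanSpace ℝ (Fin N)) :
    min (2 ^ (2 - r)) (1 / 2) * ‖ξ - η‖ ^ r ≤
      ⟪(‖ξ‖ ^ (r - 2)) • ξ - (‖η‖ ^ (r - 2)) • η, ξ - η⟫ := by
  set a := ‖ξ‖ with ha_def
  set b := ‖η‖ with hb_def
  set d := ‖ξ - η‖ with hd_def
  have ha : 0 ≤ a := norm_nonneg _
  have hb : 0 ≤ b := norm_nonneg _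
  have hd : 0 ≤ d := norm_nonneg _
  have hA : 0 ≤ a ^ (r - 2) := Real.rpow_nonneg ha _
  have hB : 0 ≤ b ^ (r - 2) := Real.rpow_nonneg hb _
  have hCr : min ((2:ℝ) ^ (2 - r)) (1 / 2) ≤ 1 / 2 := min_le_right _ _
  have hCrpos : (0:ℝ) < min ((2:ℝ) ^ (2 - r)) (1 / 2) :=
    lt_min (Real.rpow_pos_of_pos two_pos _) (by norm_num)
  -- the identity
  have hinner_xy : ⟪ξ, η⟫ ≤ a * b := real_inner_le_norm ξ η
  have hdsq : d ^ 2 = a ^ 2 - 2 * ⟪ξ, η⟫ + b ^ 2 := by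
    rw [hd_def, ha_def, hb_def, norm_sub_sq_real]
  have hident : ⟪(a ^ (r - 2)) • ξ - (b ^ (r - 2)) • η, ξ - η⟫ =
      (a ^ (r - 2) + b ^ (r - 2)) / 2 * d ^ 2
        + (a ^ (r - 2) - b ^ (r - 2)) * (a ^ 2 - b ^ 2) / 2 := by
    have e : ⟪η, ξ⟫ = ⟪ξ, η⟫ := real_inner_comm ξ η
    simp only [inner_sub_left, inner_sub_right, real_inner_smul_left,
      real_inner_self_eq_norm_sq, e, ← ha_def, ← hb_def]
    rw [hdsq]; ring
  have hsign : 0 ≤ (a ^ (r - 2) - b ^ (r - 2)) * (a ^ 2 - b ^ 2) := by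
    rcases le_total a b with hab | hab
    · have h1 : a ^ (r - 2) ≤ b ^ (r - 2) := Real.rpow_le_rpow ha hab (by linarith)
      have h2 : a ^ 2 ≤ b ^ 2 := pow_le_pow_left₀ ha hab 2
      nlinarith
    · have h1 : b ^ (r - 2) ≤ a ^ (r - 2) := Real.rpow_le_rpow hb hab (by linarith)
      have h2 : b ^ 2 ≤ a ^ 2 := pow_le_pow_left₀ hb hab 2
      nlinarith
  have hmain : min ((2:ℝ) ^ (2 - r)) (1 / 2) * d ^ r ≤
      (a ^ (r - 2) + b ^ (r - 2)) / 2 * d ^ 2 := by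
    rcases eq_or_lt_of_le hd with hd0 | hd0
    · rw [← hd0, Real.zero_rpow (by linarith : r ≠ 0)]
      simp
    · have hdr : d ^ r = d ^ (r - 2) * d ^ 2 := by
        rw [show r = (r - 2) + 2 by ring] at *
        rw [Real.rpow_add hd0, Real.rpow_two]
        ring_nf
      rw [hdr]
      have hdab : d ≤ a + b := norm_sub_le _ _
      have hd1 : d ^ (r - 2) ≤ (a + b) ^ (r - 2) :=
        Real.rpow_le_rpow (le_of_lt hd0) hdab (by linarith)
      have key : min ((2:ℝ) ^ (2 - r)) (1 / 2) * d ^ (r - 2) ≤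
          (a ^ (r - 2) + b ^ (r - 2)) / 2 := by
        rcases le_total r 3 with hr3 | hr3
        · have h2 : (a + b) ^ (r - 2) ≤ a ^ (r - 2) + b ^ (r - 2) :=
            aux_rpow_subadd ha hb (by linarith) (by linarith)
          calc min ((2:ℝ) ^ (2 - r)) (1 / 2) * d ^ (r - 2)
              ≤ (1 / 2) * (a ^ (r - 2) + b ^ (r - 2)) := by
                apply mul_le_mul hCr (hd1.trans h2) (Real.rpow_nonneg hd _) (by norm_num)
            _ = (a ^ (r - 2) + b ^ (r - 2)) / 2 := by ring
        · have h2 : (a + b) ^ (r - 2) ≤ 2 ^ (r - 3) * (a ^ (r - 2) + b ^ (r - 2)) := by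
            have := aux_rpow_convex ha hb (p := r - 2) (by linarith)
            simpa [show r - 2 - 1 = r - 3 by ring] using this
          have hCr2 : min ((2:ℝ) ^ (2 - r)) (1 / 2) ≤ 2 ^ (2 - r) := min_le_left _ _
          calc min ((2:ℝ) ^ (2 - r)) (1 / 2) * d ^ (r - 2)
              ≤ (2:ℝ) ^ (2 - r) * (2 ^ (r - 3) * (a ^ (r - 2) + b ^ (r - 2))) := by
                apply mul_le_mul hCr2 (hd1.trans h2) (Real.rpow_nonneg hd _)
                  (le_of_lt (Real.rpow_pos_of_pos two_pos _))
            _ = (2:ℝ) ^ ((2 - r) + (r - 3)) * (a ^ (r - 2) + b ^ (r - 2)) := by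
                rw [Real.rpow_add two_pos]; ring
            _ = (a ^ (r - 2) + b ^ (r - 2)) / 2 := by
                norm_num [show (2:ℝ) - r + (r - 3) = -1 by ring,
                  Real.rpow_neg_one]
                ring
      calc min ((2:ℝ) ^ (2 - r)) (1 / 2) * (d ^ (r - 2) * d ^ 2)
          = (min ((2:ℝ) ^ (2 - r)) (1 / 2) * d ^ (r - 2)) * d ^ 2 := by ring
        _ ≤ (a ^ (r - 2) + b ^ (r - 2)) / 2 * d ^ 2 := by
            apply mul_le_mul_of_nonneg_right key (sq_nonneg d)
  rw [hident]
  linarith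

private theorem monotone_ineq_r_ge_two_aux (N : ℕ) (r : ℝ) (hr : 2 ≤ r) (h : ℝ → ℝ)
    (hmono : MonotoneOn h (Set.Ici 0)) (hnonneg : ∀ t ≥ (0 : ℝ), 0 ≤ h t)
    (ξ η : EuclideanSpace ℝ (Fin N)) (hba : ‖η‖ ≤ ‖ξ‖) :
    min (2 ^ (2 - r)) (1 / 2) * ‖ξ - η‖ ^ r * h (min ‖ξ‖ ‖η‖) ≤
      ⟪(h ‖ξ‖ * ‖ξ‖ ^ (r - 2)) • ξ - (h ‖η‖ * ‖η‖ ^ (r - 2)) • η, ξ - η⟫ := by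
  have ha : (0:ℝ) ≤ ‖ξ‖ := norm_nonneg _
  have hb : (0:ℝ) ≤ ‖η‖ := norm_nonneg _
  have hmin : min ‖ξ‖ ‖η‖ = ‖η‖ := min_eq_right hba
  rw [hmin]
  set m := h ‖η‖ with hm_def
  have hm : 0 ≤ m := hnonneg _ hb
  have hham : m ≤ h ‖ξ‖ := hmono hb ha hba
  -- decompose the vector
  have hdecomp : (h ‖ξ‖ * ‖ξ‖ ^ (r - 2)) • ξ - (h ‖η‖ * ‖η‖ ^ (r - 2)) • η
      = m • ((‖ξ‖ ^ (r - 2)) • ξ - (‖η‖ ^ (r - 2)) • η)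
        + ((h ‖ξ‖ - m) * ‖ξ‖ ^ (r - 2)) • ξ := by
    rw [hm_def]; module
  rw [hdecomp, inner_add_left, real_inner_smul_left, real_inner_smul_left]
  have hplain := plain_key N hr ξ η
  have hpos2 : 0 ≤ (h ‖ξ‖ - m) * ‖ξ‖ ^ (r - 2) * ⟪ξ, ξ - η⟫ := by
    have h1 : ⟪ξ, η⟫ ≤ ‖ξ‖ * ‖η‖ := real_inner_le_norm ξ η
    have h2 : ⟪ξ, ξ - η⟫ = ‖ξ‖ ^ 2 - ⟪ξ, η⟫ := by
      rw [inner_sub_right, real_inner_self_eq_norm_sq]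
    have h3 : 0 ≤ ⟪ξ, ξ - η⟫ := by rw [h2]; nlinarith
    have h4 : 0 ≤ ‖ξ‖ ^ (r - 2) := Real.rpow_nonneg ha _
    exact mul_nonneg (mul_nonneg (by linarith) h4) h3
  have hmono2 : min (2 ^ (2 - r)) (1 / 2) * ‖ξ - η‖ ^ r * m
      ≤ m * ⟪(‖ξ‖ ^ (r - 2)) • ξ - (‖η‖ ^ (r - 2)) • η, ξ - η⟫ := by
    calc min (2 ^ (2 - r)) (1 / 2) * ‖ξ - η‖ ^ r * m
        = m * (min (2 ^ (2 - r)) (1 / 2) * ‖ξ - η‖ ^ r) := by ring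
      _ ≤ m * ⟪(‖ξ‖ ^ (r - 2)) • ξ - (‖η‖ ^ (r - 2)) • η, ξ - η⟫ :=
          mul_le_mul_of_nonneg_left hplain hm
  linarith

theorem monotone_ineq_r_ge_two (N : ℕ) (r : ℝ) (hr : 2 ≤ r) (h : ℝ → ℝ)
    (hmono : MonotoneOn h (Set.Ici 0)) (hnonneg : ∀ t ≥ (0 : ℝ), 0 ≤ h t)
    (ξ η : EuclideanSpace ℝ (Fin N)) :
    min (2 ^ (2 - r)) (1 / 2) * ‖ξ - η‖ ^ r * h (min ‖ξ‖ ‖η‖) ≤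
      inner ℝ ((h ‖ξ‖ * ‖ξ‖ ^ (r - 2)) • ξ - (h ‖η‖ * ‖η‖ ^ (r - 2)) • η) (ξ - η) := by
  -- WLOG ‖η‖ ≤ ‖ξ‖
  rcases le_total ‖η‖ ‖ξ‖ with hba | hba
  case inr =>
    have key := monotone_ineq_r_ge_two_aux N r hr h hmono hnonneg η ξ hba
    rw [min_comm ‖η‖ ‖ξ‖, norm_sub_rev η ξ] at key
    calc min (2 ^ (2 - r)) (1 / 2) * ‖ξ - η‖ ^ r * h (min ‖ξ‖ ‖η‖)
        ≤ ⟪(h ‖η‖ * ‖η‖ ^ (r - 2)) • η - (h ‖ξ‖ * ‖ξ‖ ^ (r - 2)) • ξ, η - ξ⟫ := key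
      _ = ⟪(h ‖ξ‖ * ‖ξ‖ ^ (r - 2)) • ξ - (h ‖η‖ * ‖η‖ ^ (r - 2)) • η, ξ - η⟫ := by
          rw [show (h ‖η‖ * ‖η‖ ^ (r - 2)) • η - (h ‖ξ‖ * ‖ξ‖ ^ (r - 2)) • ξ
              = -((h ‖ξ‖ * ‖ξ‖ ^ (r - 2)) • ξ - (h ‖η‖ * ‖η‖ ^ (r - 2)) • η) by abel,
            show η - ξ = -(ξ - η) by abel, inner_neg_neg]
  case inl =>
    exact monotone_ineq_r_ge_two_aux N r hr h hmono hnonneg ξ η hba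
end

section
/- Let h: [0,∞) → [0,∞) be increasing and 1 < r < 2. Then for all ξ, η ∈ ℝ^N with (ξ, η) ≠ (0, 0), (|ξ| + |η|)^(2−r) · (h(|ξ|)·|ξ|^(r−2)·ξ − h(|η|)·|η|^(r−2)·η) · (ξ − η) ≥ (r−1) · |ξ − η|² · h(min{|ξ|, |η|}). -/
/-- Concavity tangent-line inequality: for `0 ≤ p ≤ 1`, `0 < a`, `0 ≤ b`,
`b ^ p ≤ a ^ p + p * a ^ (p - 1) * (b - a)`. -/
lemma concave_tangent_aux {p a b : ℝ} (hp0 : 0 ≤ p) (hp1 : p ≤ 1) (ha : 0 < a)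
    (hb : 0 ≤ b) : b ^ p ≤ a ^ p + p * a ^ (p - 1) * (b - a) := by
  have hs : -1 ≤ (b - a) / a := by
    rw [le_div_iff₀ ha]; linarith
  have hB := rpow_one_add_le_one_add_mul_self hs hp0 hp1
  have h1 : 1 + (b - a) / a = b / a := by field_simp; ring
  rw [h1] at hB
  have hap : (0 : ℝ) < a ^ p := Real.rpow_pos_of_pos ha p
  have hmul := mul_le_mul_of_nonneg_right hB hap.le
  have hL : (b / a) ^ p * a ^ p = b ^ p := by
    rw [Real.div_rpow hb ha.le, div_mul_cancel₀ _ hap.ne']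
  have hR : (1 + p * ((b - a) / a)) * a ^ p = a ^ p + p * a ^ (p - 1) * (b - a) := by
    rw [Real.rpow_sub ha p 1, Real.rpow_one]
    field_simp
  rw [hL, hR] at hmul
  exact hmul

set_option maxHeartbeats 1000000 in
/-- The key case: `‖η‖ ≤ ‖ξ‖`. -/
lemma key_ineq (N : ℕ) (r : ℝ) (hr1 : 1 < r) (hr2 : r < 2)
    (h : ℝ → ℝ) (hmono : MonotoneOn h (Set.Ici 0)) (hnonneg : ∀ t ≥ (0 : ℝ), 0 ≤ h t)
    (ξ η : EuclideanSpace ℝ (Fin N)) (hne : ¬(ξ = 0 ∧ η = 0)) (hba : ‖η‖ ≤ ‖ξ‖) :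
    (r - 1) * ‖ξ - η‖ ^ 2 * h (min ‖ξ‖ ‖η‖) ≤
      (‖ξ‖ + ‖η‖) ^ (2 - r) *
        inner ℝ ((h ‖ξ‖ * ‖ξ‖ ^ (r - 2)) • ξ - (h ‖η‖ * ‖η‖ ^ (r - 2)) • η) (ξ - η) := by
  have hξ : ξ ≠ 0 := by
    rintro rfl
    have : η = 0 := by
      have := norm_nonneg η
      have : ‖η‖ = 0 := le_antisymm (by simpa using hba) (norm_nonneg η)
      simpa [norm_eq_zero] using this
    exact hne ⟨rfl, this⟩
  have ha : (0 : ℝ) < ‖ξ‖ := norm_pos_iff.mpr hξ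
  by_cases hη : η = 0
  · subst hη
    have hmin : min ‖ξ‖ ‖(0 : EuclideanSpace ℝ (Fin N))‖ = 0 := by
      simp [min_eq_right (norm_nonneg ξ)]
    rw [hmin]
    simp only [norm_zero, sub_zero, add_zero, smul_zero]
    have hinner : (inner ℝ ((h ‖ξ‖ * ‖ξ‖ ^ (r - 2)) • ξ) ξ : ℝ)
        = h ‖ξ‖ * ‖ξ‖ ^ (r - 2) * ‖ξ‖ ^ 2 := by
      rw [real_inner_smul_left, real_inner_self_eq_norm_sq]
    rw [hinner]
    have hpow : ‖ξ‖ ^ (2 - r) * ‖ξ‖ ^ (r - 2) = 1 := by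
      rw [← Real.rpow_add ha]; norm_num
    have h0a : h 0 ≤ h ‖ξ‖ := hmono (Set.mem_Ici.mpr le_rfl) (Set.mem_Ici.mpr ha.le) ha.le
    have h0 : 0 ≤ h 0 := hnonneg 0 le_rfl
    have hsq : (0 : ℝ) ≤ ‖ξ‖ ^ 2 := by positivity
    calc (r - 1) * ‖ξ‖ ^ 2 * h 0 ≤ 1 * ‖ξ‖ ^ 2 * h ‖ξ‖ := by
          apply mul_le_mul (mul_le_mul (by linarith) le_rfl hsq (by linarith)) h0a h0
          positivity
      _ = ‖ξ‖ ^ (2 - r) * (h ‖ξ‖ * ‖ξ‖ ^ (r - 2) * ‖ξ‖ ^ 2) := by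
          rw [show ‖ξ‖ ^ (2 - r) * (h ‖ξ‖ * ‖ξ‖ ^ (r - 2) * ‖ξ‖ ^ 2)
              = (‖ξ‖ ^ (2 - r) * ‖ξ‖ ^ (r - 2)) * (h ‖ξ‖ * ‖ξ‖ ^ 2) by ring, hpow]
          ring
  · -- main case: both nonzero
    have hb : (0 : ℝ) < ‖η‖ := norm_pos_iff.mpr hη
    set a := ‖ξ‖ with ha_def
    set b := ‖η‖ with hb_def
    set t : ℝ := inner ℝ ξ η with ht_def
    set A := a ^ (r - 2) with hA_def
    set B := b ^ (r - 2) with hB_def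
    set C := (a + b) ^ (r - 2) with hC_def
    clear_value t A B C
    have hab : (0 : ℝ) < a + b := by linarith
    have hApos : 0 < A := by rw [hA_def]; exact Real.rpow_pos_of_pos ha _
    have hBpos : 0 < B := by rw [hB_def]; exact Real.rpow_pos_of_pos hb _
    have hCpos : 0 < C := by rw [hC_def]; exact Real.rpow_pos_of_pos hab _
    have hCA : C ≤ A := by
      rw [hA_def, hC_def]
      exact Real.rpow_le_rpow_of_nonpos ha (by linarith) (by linarith)
    have hCB : C ≤ B := by
      rw [hB_def, hC_def]
      exact Real.rpow_le_rpow_of_nonpos hb (by linarith) (by linarith)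
    -- inner product bounds
    have htub : t ≤ a * b := by rw [ht_def]; exact real_inner_le_norm ξ η
    have htlb : -(a * b) ≤ t := by
      rw [ht_def]; exact (abs_le.mp (abs_real_inner_le_norm ξ η)).1
    -- rpow identities
    have hAa : A * a = a ^ (r - 1) := by
      rw [hA_def, show r - 1 = (r - 2) + 1 by ring, Real.rpow_add ha, Real.rpow_one]
    have hBb : B * b = b ^ (r - 1) := by
      rw [hB_def, show r - 1 = (r - 2) + 1 by ring, Real.rpow_add hb, Real.rpow_one]
    -- concavity: a^(r-1) - b^(r-1) ≥ (r-1) * A * (a - b)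
    have hcon : (r - 1) * A * (a - b) ≤ A * a - B * b := by
      have := concave_tangent_aux (p := r - 1) (a := a) (b := b)
        (by linarith) (by linarith) ha hb.le
      rw [show r - 1 - 1 = r - 2 by ring, ← hA_def] at this
      rw [hAa, hBb]
      linarith
    -- G₊ = (A*a - B*b)*(a - b) - (r-1)*(a-b)^2*C ≥ 0
    have hGp : 0 ≤ (A * a - B * b) * (a - b) - (r - 1) * (a - b) ^ 2 * C := by
      have h1 : (r - 1) * (a - b) ^ 2 * C ≤ (r - 1) * (a - b) ^ 2 * A :=
        mul_le_mul_of_nonneg_left hCA (by nlinarith)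
      have h2 : (r - 1) * A * (a - b) * (a - b) ≤ (A * a - B * b) * (a - b) :=
        mul_le_mul_of_nonneg_right hcon (by linarith)
      nlinarith
    -- G₋ = (A*a + B*b)*(a + b) - (r-1)*(a+b)^2*C ≥ 0
    have hGm : 0 ≤ (A * a + B * b) * (a + b) - (r - 1) * (a + b) ^ 2 * C := by
      have h1 : C * a ≤ A * a := mul_le_mul_of_nonneg_right hCA ha.le
      have h2 : C * b ≤ B * b := mul_le_mul_of_nonneg_right hCB hb.le
      nlinarith [mul_le_mul_of_nonneg_right (add_le_add h1 h2) hab.le,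
        mul_nonneg (mul_nonneg hCpos.le (sq_nonneg (a + b))) (by linarith : (0:ℝ) ≤ 2 - r)]
    -- G(t) ≥ 0
    have hG : 0 ≤ A * (a ^ 2 - t) + B * (b ^ 2 - t) - (r - 1) * (a ^ 2 + b ^ 2 - 2 * t) * C := by
      have h2ab : (0 : ℝ) < 2 * (a * b) := by positivity
      have hid : 2 * (a * b) *
          (A * (a ^ 2 - t) + B * (b ^ 2 - t) - (r - 1) * (a ^ 2 + b ^ 2 - 2 * t) * C)
          = (a * b - t) * ((A * a + B * b) * (a + b) - (r - 1) * (a + b) ^ 2 * C)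
            + (a * b + t) * ((A * a - B * b) * (a - b) - (r - 1) * (a - b) ^ 2 * C) := by
        ring
      have hnn : 0 ≤ 2 * (a * b) *
          (A * (a ^ 2 - t) + B * (b ^ 2 - t) - (r - 1) * (a ^ 2 + b ^ 2 - 2 * t) * C) := by
        rw [hid]
        have := mul_nonneg (by linarith : (0:ℝ) ≤ a * b - t) hGm
        have := mul_nonneg (by linarith : (0:ℝ) ≤ a * b + t) hGp
        linarith
      nlinarith
    -- expand inner product
    have c1 : (inner ℝ ξ η : ℝ) = t := ht_def.symm
    have c2 : (inner ℝ η ξ : ℝ) = t := by rw [real_inner_comm]; exact ht_def.symm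
    have hinner : (inner ℝ ((h a * A) • ξ - (h b * B) • η) (ξ - η) : ℝ)
        = h a * A * (a ^ 2 - t) + h b * B * (b ^ 2 - t) := by
      simp only [inner_sub_left, inner_sub_right, real_inner_smul_left,
        real_inner_self_eq_norm_sq, c1, c2, ← ha_def, ← hb_def]
      try ring
    have hnormsub : ‖ξ - η‖ ^ 2 = a ^ 2 + b ^ 2 - 2 * t := by
      rw [norm_sub_sq_real]
      simp only [c1, ← ha_def, ← hb_def]
      ring
    have hmin : min a b = b := min_eq_right hba
    rw [hinner, hnormsub, hmin]
    -- h values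
    have hhb : 0 ≤ h b := hnonneg b hb.le
    have hhab : h b ≤ h a := hmono (Set.mem_Ici.mpr hb.le) (Set.mem_Ici.mpr ha.le) hba
    have hD : (0 : ℝ) < (a + b) ^ (2 - r) := Real.rpow_pos_of_pos hab _
    have hDC : (a + b) ^ (2 - r) * C = 1 := by
      rw [hC_def, ← Real.rpow_add hab]; norm_num
    -- step 1: scalar inequality multiplied by h b
    have step1 : (r - 1) * (a ^ 2 + b ^ 2 - 2 * t) * h b * C
        ≤ h b * (A * (a ^ 2 - t) + B * (b ^ 2 - t)) := by
      have := mul_le_mul_of_nonneg_left hG hhb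
      nlinarith
    -- step 2: replace h b by h a in the A-term
    have step2 : h b * (A * (a ^ 2 - t) + B * (b ^ 2 - t))
        ≤ h a * A * (a ^ 2 - t) + h b * B * (b ^ 2 - t) := by
      have hta : 0 ≤ a ^ 2 - t := by nlinarith
      nlinarith [mul_nonneg (mul_nonneg (by linarith : (0:ℝ) ≤ h a - h b) hApos.le) hta]
    have step3 : (r - 1) * (a ^ 2 + b ^ 2 - 2 * t) * h b * C
        ≤ h a * A * (a ^ 2 - t) + h b * B * (b ^ 2 - t) := le_trans step1 step2
    calc (r - 1) * (a ^ 2 + b ^ 2 - 2 * t) * h b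
        = (a + b) ^ (2 - r) * ((r - 1) * (a ^ 2 + b ^ 2 - 2 * t) * h b * C) := by
          linear_combination (-((r - 1) * (a ^ 2 + b ^ 2 - 2 * t) * h b)) * hDC
      _ ≤ (a + b) ^ (2 - r) * (h a * A * (a ^ 2 - t) + h b * B * (b ^ 2 - t)) :=
          mul_le_mul_of_nonneg_left step3 hD.le

theorem monotone_ineq_r_lt_two (N : ℕ) (r : ℝ) (hr1 : 1 < r) (hr2 : r < 2)
    (h : ℝ → ℝ) (hmono : MonotoneOn h (Set.Ici 0)) (hnonneg : ∀ t ≥ (0 : ℝ), 0 ≤ h t)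
    (ξ η : EuclideanSpace ℝ (Fin N)) (hne : ¬(ξ = 0 ∧ η = 0)) :
    (r - 1) * ‖ξ - η‖ ^ 2 * h (min ‖ξ‖ ‖η‖) ≤
      (‖ξ‖ + ‖η‖) ^ (2 - r) *
        inner ℝ ((h ‖ξ‖ * ‖ξ‖ ^ (r - 2)) • ξ - (h ‖η‖ * ‖η‖ ^ (r - 2)) • η) (ξ - η) := by
  rcases le_total ‖η‖ ‖ξ‖ with hba | hba
  · exact key_ineq N r hr1 hr2 h hmono hnonneg ξ η hne hba
  · have key := key_ineq N r hr1 hr2 h hmono hnonneg η ξ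
      (fun ⟨h1, h2⟩ => hne ⟨h2, h1⟩) hba
    have e1 : min ‖η‖ ‖ξ‖ = min ‖ξ‖ ‖η‖ := min_comm _ _
    have e2 : ‖η - ξ‖ = ‖ξ - η‖ := norm_sub_rev _ _
    have e3 : ‖η‖ + ‖ξ‖ = ‖ξ‖ + ‖η‖ := add_comm _ _
    have e4 : (inner ℝ ((h ‖η‖ * ‖η‖ ^ (r - 2)) • η - (h ‖ξ‖ * ‖ξ‖ ^ (r - 2)) • ξ) (η - ξ) : ℝ)
        = inner ℝ ((h ‖ξ‖ * ‖ξ‖ ^ (r - 2)) • ξ - (h ‖η‖ * ‖η‖ ^ (r - 2)) • η) (ξ - η) := by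
      rw [show (h ‖η‖ * ‖η‖ ^ (r - 2)) • η - (h ‖ξ‖ * ‖ξ‖ ^ (r - 2)) • ξ
          = -((h ‖ξ‖ * ‖ξ‖ ^ (r - 2)) • ξ - (h ‖η‖ * ‖η‖ ^ (r - 2)) • η) by abel,
        show η - ξ = -(ξ - η) by abel, inner_neg_neg]
    rw [e1, e2, e3, e4] at key
    exact key
end

section
/- For all t ≥ 0 and all q > 1, log(e + t) + t/(q·(e + t)) ≤ (1 + κ/q)·log(e + t), where κ = e/(e + t₀) and t₀ is the unique positive solution of t = e·log(e + t). -/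
theorem log_plus_frac_le (t₀ κ : ℝ) (ht₀pos : 0 < t₀)
    (ht₀ : t₀ = Real.exp 1 * Real.log (Real.exp 1 + t₀))
    (hκ : κ = Real.exp 1 / (Real.exp 1 + t₀)) :
    ∀ t ≥ (0 : ℝ), ∀ q : ℝ, 1 < q →
      Real.log (Real.exp 1 + t) + t / (q * (Real.exp 1 + t)) ≤
        (1 + κ / q) * Real.log (Real.exp 1 + t) := by
  intro t ht q hq
  set e := Real.exp 1 with he_def
  have he : 0 < e := Real.exp_pos 1
  have hx : 0 < e + t := by linarith
  have ha : 0 < e + t₀ := by linarith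
  have hq0 : 0 < q := by linarith
  -- log((e+t₀)/(e+t)) ≤ (e+t₀)/(e+t) - 1
  have hlog : Real.log (e + t₀) - Real.log (e + t) ≤ (e + t₀) / (e + t) - 1 := by
    have := Real.log_le_sub_one_of_pos (div_pos ha hx)
    rwa [Real.log_div ha.ne' hx.ne'] at this
  -- main inequality: t * (e + t₀) ≤ e * (e + t) * log (e + t)
  have hmain : t * (e + t₀) ≤ e * (e + t) * Real.log (e + t) := by
    have h1 : (e + t) * (Real.log (e + t₀) - Real.log (e + t)) ≤ (e + t₀) - (e + t) := by
      have := mul_le_mul_of_nonneg_left hlog hx.le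
      calc (e + t) * (Real.log (e + t₀) - Real.log (e + t))
          ≤ (e + t) * ((e + t₀) / (e + t) - 1) := this
        _ = (e + t₀) - (e + t) := by field_simp
    have h2 : e * Real.log (e + t₀) = t₀ := ht₀.symm
    nlinarith [mul_le_mul_of_nonneg_left h1 he.le]
  rw [hκ]
  have hκq : t / (q * (e + t)) ≤ e / (e + t₀) / q * Real.log (e + t) := by
    rw [div_div, div_mul_eq_mul_div, div_le_div_iff₀ (by positivity) (by positivity)]
    nlinarith [mul_le_mul_of_nonneg_right hmain hq0.le]
  linarith [hκq, (by ring : (1 + e / (e + t₀) / q) * Real.log (e + t)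
    = Real.log (e + t) + e / (e + t₀) / q * Real.log (e + t))]
end
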